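/- Let H be a d×d Hermitian complex matrix with eigenvalues λ₁, ..., λ_d, and let Δ = diag(√p₁, ..., √p_d) with p_i ≥ 0 and Σ_i p_i = 1. Then ‖Δ H Δ‖_* ≤ Σ_i p̃_i |λ|_i ≤ max_i |λ_i|, where |λ|_1 ≥ |λ|_2 ≥ ... ≥ |λ|_d are the absolute values of the eigenvalues of H in decreasing order and p̃_1 ≥ p̃_2 ≥ ... ≥ p̃_d are the weights p_i in decreasing order. -/

import Mathlib

open Matrix
open scoped ComplexOrder

/-- The trace norm (nuclear norm) of a complex matrix: the trace of `√(Mᴴ M)`,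
which equals the sum of the singular values of `M`. -/
noncomputable def traceNorm {n : Type*} [Fintype n] [DecidableEq n]
    (M : Matrix n n ℂ) : ℝ :=
  (((Matrix.posSemidef_conjTranspose_mul_self M).1.eigenvectorUnitary.1 *
      Matrix.diagonal (((↑) : ℝ → ℂ) ∘ Real.sqrt ∘ (Matrix.posSemidef_conjTranspose_mul_self M).1.eigenvalues) *
      (star (Matrix.posSemidef_conjTranspose_mul_self M).1.eigenvectorUnitary : Matrix n n ℂ)).trace).re

/-- The values of a finite real tuple rearranged in decreasing order. -/
noncomputable def sortedDesc {d : ℕ} (f : Fin d → ℝ) : Fin d → ℝ :=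
  fun i =>
    ((List.ofFn f).insertionSort (· ≥ ·)).get
      ⟨i.1, by rw [List.length_insertionSort, List.length_ofFn]; exact i.2⟩

/-! Write `H = U diag(λ) Uᴴ` and `W = Δ U`, so that `Δ H Δ = W diag(λ) Wᴴ`. Against the spectral
decomposition `Δ H Δ = V diag(μ) Vᴴ` this gives `μ_k = ∑ j, λ_j |(Vᴴ W)_kj|²`, hence
`∑ k, |μ_k| ≤ ∑ j, |λ_j| ‖W e_j‖² = ∑ i j, p_i |U_ij|² |λ_j|`. The matrix `(|U_ij|²)` is doubly
stochastic, so by Birkhoff's theorem this bilinear expression is maximal at a permutation matrix,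
where the rearrangement inequality bounds it by `∑ i, p̃_i |λ|_i`. The second inequality says that a
convex combination is at most the maximum. -/

section SortedDesc

variable {d : ℕ}

lemma ofFn_sortedDesc (f : Fin d → ℝ) :
    List.ofFn (sortedDesc f) = (List.ofFn f).insertionSort (· ≥ ·) :=
  List.ext_get (by simp) fun _ _ _ => by simp [sortedDesc]

lemma sortedDesc_eq_comp_sort (f : Fin d → ℝ) :
    sortedDesc f = f ∘ Tuple.sort (fun i => -f i) := by
  have hanti : Antitone (f ∘ Tuple.sort (fun i => -f i)) := fun a b hab => by
    simpa using Tuple.monotone_sort (fun i => -f i) hab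
  refine List.ofFn_injective (List.Perm.eq_of_pairwise' (r := (· ≥ ·)) ?_ ?_ ?_)
  · rw [ofFn_sortedDesc]
    exact List.pairwise_insertionSort _ _
  · exact List.pairwise_ofFn.2 fun a b hab => hanti hab.le
  · rw [ofFn_sortedDesc]
    exact ((List.ofFn f).perm_insertionSort _).trans
      ((Tuple.sort (fun i => -f i)).ofFn_comp_perm f).symm

lemma antitone_sortedDesc (f : Fin d → ℝ) : Antitone (sortedDesc f) := fun a b hab => by
  simpa [sortedDesc_eq_comp_sort] using Tuple.monotone_sort (fun i => -f i) hab

lemma sum_sortedDesc (f : Fin d → ℝ) : ∑ i, sortedDesc f i = ∑ i, f i := by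
  simpa [sortedDesc_eq_comp_sort] using Equiv.sum_comp (Tuple.sort fun i => -f i) f

lemma sortedDesc_nonneg {f : Fin d → ℝ} (hf : ∀ i, 0 ≤ f i) (i : Fin d) : 0 ≤ sortedDesc f i := by
  simpa [sortedDesc_eq_comp_sort] using hf _

lemma sortedDesc_le_iSup (f : Fin d → ℝ) (i : Fin d) : sortedDesc f i ≤ ⨆ j, f j := by
  rw [sortedDesc_eq_comp_sort]
  exact le_ciSup (Set.finite_range f).bddAbove _

lemma dotProduct_comp_perm_le_sum_sortedDesc_mul (a b : Fin d → ℝ) (σ : Equiv.Perm (Fin d)) :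
    a ⬝ᵥ (b ∘ σ) ≤ ∑ i, sortedDesc a i * sortedDesc b i := by
  set α := Tuple.sort (fun i => -a i)
  set β := Tuple.sort (fun i => -b i)
  have hab : a ⬝ᵥ (b ∘ σ) = ∑ i, sortedDesc a i * sortedDesc b ((α.trans (σ.trans β.symm)) i) := by
    rw [dotProduct, ← Equiv.sum_comp α]
    simp [sortedDesc_eq_comp_sort, α, β]
  rw [hab]
  simpa using ((antitone_sortedDesc a).monovary
    (antitone_sortedDesc b)).sum_smul_comp_perm_le_sum_smul (σ := α.trans (σ.trans β.symm))

lemma dotProduct_mulVec_le_sum_sortedDesc_mul (a b : Fin d → ℝ) {B : Matrix (Fin d) (Fin d) ℝ}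
    (hB : B ∈ doublyStochastic ℝ (Fin d)) :
    a ⬝ᵥ (B *ᵥ b) ≤ ∑ i, sortedDesc a i * sortedDesc b i := by
  rw [← SetLike.mem_coe, doublyStochastic_eq_convexHull_permMatrix] at hB
  have hconv : ConvexOn ℝ Set.univ fun B : Matrix (Fin d) (Fin d) ℝ => a ⬝ᵥ (B *ᵥ b) :=
    ((dotProductBilin ℝ ℝ a).comp ((mulVecBilin ℝ ℝ).flip b)).convexOn convex_univ
  obtain ⟨_, ⟨σ, rfl⟩, hσ⟩ := hconv.exists_ge_of_mem_convexHull (Set.subset_univ _) hB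
  rw [permMatrix_mulVec] at hσ
  exact hσ.trans (dotProduct_comp_perm_le_sum_sortedDesc_mul a b σ)

end SortedDesc

lemma sum_mul_le_of_sum_eq_one {ι : Type*} [Fintype ι] {q f : ι → ℝ} {S : ℝ}
    (hq : ∀ i, 0 ≤ q i) (hsum : ∑ i, q i = 1) (hf : ∀ i, f i ≤ S) : ∑ i, q i * f i ≤ S :=
  calc ∑ i, q i * f i ≤ ∑ i, q i * S :=
        Finset.sum_le_sum fun i _ => mul_le_mul_of_nonneg_left (hf i) (hq i)
    _ = S := by rw [← Finset.sum_mul, hsum, one_mul]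

lemma Matrix.re_conjTranspose_mul_self_apply_self {m n : Type*} [Fintype m] (A : Matrix m n ℂ)
    (j : n) : ((Aᴴ * A) j j).re = ∑ i, Complex.normSq (A i j) := by
  simp [mul_apply, Complex.normSq_apply]

lemma Matrix.re_mul_diagonal_mul_conjTranspose_apply_self {m n : Type*} [Fintype n]
    [DecidableEq n] (A : Matrix m n ℂ) (c : n → ℝ) (k : m) :
    ((A * diagonal (fun j => (c j : ℂ)) * Aᴴ) k k).re = ∑ j, c j * Complex.normSq (A k j) := by
  rw [mul_apply, Complex.re_sum]
  simp only [mul_diagonal, conjTranspose_apply]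
  refine Finset.sum_congr rfl fun j _ => ?_
  rw [mul_right_comm, RCLike.star_def, Complex.mul_conj, ← Complex.ofReal_mul, Complex.ofReal_re,
    mul_comm]

lemma Matrix.map_normSq_mem_doublyStochastic {n : Type*} [Fintype n] [DecidableEq n]
    {U : Matrix n n ℂ} (hU : U ∈ unitaryGroup n ℂ) :
    U.map Complex.normSq ∈ doublyStochastic ℝ n := by
  have hcol : ∀ {V : Matrix n n ℂ}, V ∈ unitaryGroup n ℂ → ∀ j, ∑ i, Complex.normSq (V i j) = 1 :=
    fun hV j => by
      rw [← re_conjTranspose_mul_self_apply_self, ← star_eq_conjTranspose,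
        Matrix.mem_unitaryGroup_iff'.1 hV, one_apply_eq, Complex.one_re]
  have hrow : ∀ i, ∑ j, Complex.normSq (U i j) = 1 := fun i => by
    simpa [Complex.normSq_conj] using hcol (Unitary.star_mem hU) i
  exact mem_doublyStochastic_iff_sum.2 ⟨fun _ _ => Complex.normSq_nonneg _, hrow, hcol hU⟩

lemma Matrix.IsHermitian.sum_abs_eigenvalues_le {m n : Type*} [Fintype m] [Fintype n]
    [DecidableEq m] [DecidableEq n] {M : Matrix n n ℂ} (hM : M.IsHermitian) (W : Matrix n m ℂ)
    (c : m → ℝ) (hMW : M = W * diagonal (fun j => (c j : ℂ)) * Wᴴ) :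
    ∑ k, |hM.eigenvalues k| ≤ ∑ j, |c j| * ((Wᴴ * W) j j).re := by
  set V : Matrix n n ℂ := (hM.eigenvectorUnitary : Matrix n n ℂ)
  set A := star V * W
  have hV : V * star V = 1 := Matrix.mem_unitaryGroup_iff.1 hM.eigenvectorUnitary.2
  have hμ : ∀ k, hM.eigenvalues k = ∑ j, c j * Complex.normSq (A k j) := fun k => by
    have hconj : star V * M * V = A * diagonal (fun j => (c j : ℂ)) * Aᴴ :=
      calc star V * M * V = star V * (W * diagonal (fun j => (c j : ℂ)) * Wᴴ) * V := by rw [← hMW]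
        _ = A * diagonal (fun j => (c j : ℂ)) * Aᴴ := by
          simp only [A, conjTranspose_mul, star_eq_conjTranspose, conjTranspose_conjTranspose,
            Matrix.mul_assoc]
    have h := congr_fun (congr_fun hM.conjStarAlgAut_star_eigenvectorUnitary k) k
    rw [Unitary.conjStarAlgAut_star_apply, diagonal_apply_eq] at h
    rw [← re_mul_diagonal_mul_conjTranspose_apply_self, ← hconj]
    simpa [V] using congrArg Complex.re h.symm
  have hWW : Wᴴ * W = Aᴴ * A := by
    rw [conjTranspose_mul, star_eq_conjTranspose, conjTranspose_conjTranspose, Matrix.mul_assoc,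
      ← Matrix.mul_assoc V, hV, Matrix.one_mul]
  calc ∑ k, |hM.eigenvalues k| ≤ ∑ k, ∑ j, |c j| * Complex.normSq (A k j) :=
        Finset.sum_le_sum fun k _ => by
          rw [hμ]
          refine (Finset.abs_sum_le_sum_abs _ _).trans_eq (Finset.sum_congr rfl fun j _ => ?_)
          rw [abs_mul, abs_of_nonneg (Complex.normSq_nonneg _)]
    _ = ∑ j, |c j| * ((Wᴴ * W) j j).re := by
        rw [Finset.sum_comm, hWW]
        simp [re_conjTranspose_mul_self_apply_self, Finset.mul_sum]

lemma traceNorm_eq_sum_abs_eigenvalues {n : Type*} [Fintype n] [DecidableEq n]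
    {M : Matrix n n ℂ} (hM : M.IsHermitian) : traceNorm M = ∑ k, |hM.eigenvalues k| := by
  -- `√(Mᴴ M) = √(M * M) = |M|` in the continuous functional calculus.
  have hMM := (Matrix.posSemidef_conjTranspose_mul_self M).1
  have h1 : traceNorm M = (hMM.cfc Real.sqrt).trace.re := rfl
  rw [h1, ← hMM.cfc_eq, hM.eq]
  have hsq : cfc (fun x : ℝ => x * x) M = M * M := by
    rw [cfc_mul (fun x : ℝ => x) (fun x : ℝ => x) M, cfc_id' ℝ M]
  rw [← hsq, ← cfc_comp Real.sqrt (fun x : ℝ => x * x) M]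
  rw [cfc_congr (g := fun x : ℝ => |x|) (fun x _ => by simp [Real.sqrt_mul_self_eq_abs]),
    hM.cfc_eq, IsHermitian.cfc, Unitary.conjStarAlgAut_apply, Matrix.trace_mul_cycle,
    Unitary.coe_star_mul_self, Matrix.one_mul, Matrix.trace_diagonal]
  simp

/-- For a Hermitian `H` with eigenvalues `λ_i` and `Δ = diag(√p₁, …, √p_d)` with `p_i ≥ 0`,
`∑ p_i = 1`: `‖Δ H Δ‖_* ≤ ∑ i p̃_i |λ|_i ≤ max_i |λ_i|`, where `|λ|_1 ≥ |λ|_2 ≥ …` are the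
absolute eigenvalues in decreasing order and `p̃_1 ≥ p̃_2 ≥ …` the weights in decreasing
order. -/
theorem traceNorm_diag_hermitian_diag_le {d : ℕ}
    (H : Matrix (Fin d) (Fin d) ℂ) (hH : H.IsHermitian)
    (p : Fin d → ℝ) (hp : ∀ i, 0 ≤ p i) (hpsum : ∑ i, p i = 1) :
    traceNorm (Matrix.diagonal (fun i => (Real.sqrt (p i) : ℂ)) * H *
        Matrix.diagonal (fun i => (Real.sqrt (p i) : ℂ))) ≤
      ∑ i, sortedDesc p i * sortedDesc (fun k => |hH.eigenvalues k|) i ∧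
    ∑ i, sortedDesc p i * sortedDesc (fun k => |hH.eigenvalues k|) i ≤
      ⨆ i, |hH.eigenvalues i| := by
  set Δ : Matrix (Fin d) (Fin d) ℂ := diagonal (fun i => (Real.sqrt (p i) : ℂ))
  set U : Matrix (Fin d) (Fin d) ℂ := (hH.eigenvectorUnitary : Matrix (Fin d) (Fin d) ℂ)
  have hΔ : Δᴴ = Δ := by simp [Δ, diagonal_conjTranspose]
  have hM : (Δ * H * Δ).IsHermitian := by
    simpa [hΔ] using isHermitian_mul_mul_conjTranspose Δ hH
  have hMW : Δ * H * Δ = Δ * U * diagonal (fun j => (hH.eigenvalues j : ℂ)) * (Δ * U)ᴴ := by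
    conv_lhs => rw [hH.spectral_theorem]
    simp only [Unitary.conjStarAlgAut_apply, star_eq_conjTranspose, conjTranspose_mul, hΔ,
      Matrix.mul_assoc, U]
    rfl
  have hWW : ∀ j, (((Δ * U)ᴴ * (Δ * U)) j j).re = (p ᵥ* U.map Complex.normSq) j := fun j => by
    rw [re_conjTranspose_mul_self_apply_self]
    simp [vecMul, dotProduct, Δ, Complex.normSq_mul, Real.mul_self_sqrt (hp _)]
  refine ⟨?_, sum_mul_le_of_sum_eq_one (sortedDesc_nonneg hp) (by rw [sum_sortedDesc, hpsum])
    (sortedDesc_le_iSup _)⟩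
  calc traceNorm (Δ * H * Δ) = ∑ k, |hM.eigenvalues k| := traceNorm_eq_sum_abs_eigenvalues hM
    _ ≤ ∑ j, |hH.eigenvalues j| * (((Δ * U)ᴴ * (Δ * U)) j j).re :=
        hM.sum_abs_eigenvalues_le _ _ hMW
    _ = p ⬝ᵥ (U.map Complex.normSq *ᵥ fun j => |hH.eigenvalues j|) := by
        rw [dotProduct_mulVec, dotProduct_comm]
        simp only [dotProduct, hWW]
    _ ≤ _ := dotProduct_mulVec_le_sum_sortedDesc_mul _ _
        (map_normSq_mem_doublyStochastic hH.eigenvectorUnitary.2)
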